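/- arXiv:1011.1945 — 3 statements merged into one kernel-verified Lean document; each statement's English description precedes it below -/
import Mathlib

section
/- Let S = {s_1, ..., s_k} be a finite set of positive integers. The set of partitions that are simultaneously s_i-core for every s_i ∈ S is finite if and only if gcd(S) = 1. -/
/-!
Encode a partition `l` by its beta-set `{β_a = l_a + (len - 1 - a)}` of first-column hook
lengths. The remaining positions `eastStep l j` are the east steps of the boundary path, and the
hook at `(i, j)` is `β_i - eastStep l j`. Hence the beta-set of an `s`-core is closed under
subtracting `s`, and so under subtracting any element of the additive monoid generated by `S`.
If `gcd S = 1`, that monoid contains every `n ≥ N`; since `0` is not a beta number, this forces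
`β_0 < N`, which bounds the partition. Otherwise some `d ≥ 2` divides all of `S`, and the
staircases `(ck, c(k-1), …, c)` with `c = d - 1`, whose beta-sets are `{dm - 1 : 1 ≤ m ≤ k}`,
are `d`-cores.
-/

/-- A partition represented as a weakly decreasing list of positive parts. -/
def IsPartitionList (l : List ℕ) : Prop :=
  l.Pairwise (· ≥ ·) ∧ ∀ p ∈ l, 0 < p

/-- Hook length of the cell in row `i`, column `j` (both 0-indexed). -/
def hookLen (l : List ℕ) (i j : ℕ) : ℕ :=
  (l.getD i 0 - j) + (l.drop (i + 1)).countP (fun a => decide (j < a))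

/-- The hookset of a partition: the set of its hook lengths. -/
def hookset (l : List ℕ) : Set ℕ :=
  {h | ∃ i j, i < l.length ∧ j < l.getD i 0 ∧ h = hookLen l i j}

/-- `l` is a `t`-core: no hook length of `l` is divisible by `t`. -/
def IsCore (l : List ℕ) (t : ℕ) : Prop := ∀ h ∈ hookset l, ¬ t ∣ h

/-- A numerical set: contains 0 and has finite complement in ℕ. -/
def NumericalSet (S : Set ℕ) : Prop := 0 ∈ S ∧ Sᶜ.Finite

/-- The atom monoid of a numerical set. -/
def atomMonoid (S : Set ℕ) : Set ℕ := {n | ∀ s ∈ S, n + s ∈ S}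

/-- The set of positions of east steps of the profile of the partition `l`
(step `i` is north exactly when `i = l[a] + (length - 1 - a)` for some row `a`). -/
def pathSet (l : List ℕ) : Set ℕ :=
  {i | ¬ ∃ a, a < l.length ∧ i = l.getD a 0 + (l.length - 1 - a)}

/-- The staircase partition `(k, k-1, ..., 2, 1)`. -/
def staircase (k : ℕ) : List ℕ := (List.range k).reverse.map (· + 1)

def colLen (l : List ℕ) (j : ℕ) : ℕ := l.countP (j < ·)

def betaNumber (l : List ℕ) (a : ℕ) : ℕ := l.getD a 0 + (l.length - 1 - a)

/-- The position of the `j`-th east step of the boundary path, i.e. the `j`-th element of the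
complement `pathSet l` of the beta-set. -/
def eastStep (l : List ℕ) (j : ℕ) : ℕ := j + (l.length - colLen l j)

section BoundaryPath

variable {l : List ℕ}

theorem colLen_le_length (j : ℕ) : colLen l j ≤ l.length := List.countP_le_length

theorem colLen_cons (x : ℕ) (t : List ℕ) (j : ℕ) :
    colLen (x :: t) j = colLen t j + if j < x then 1 else 0 := by
  simp [colLen, List.countP_cons]

theorem lt_getD_iff_lt_colLen (hl : l.Pairwise (· ≥ ·)) (a j : ℕ) :
    j < l.getD a 0 ↔ a < colLen l j := by
  induction l generalizing a with
  | nil => simp [colLen]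
  | cons x t ih =>
    obtain ⟨hx, ht⟩ := List.pairwise_cons.1 hl
    by_cases hjx : j < x
    · rcases a with _ | a
      · simp [colLen_cons, hjx]
      · simpa [colLen_cons, hjx] using ih ht a
    · have h0 : colLen t j = 0 := List.countP_eq_zero.2 fun y hy => by
        have := hx y hy
        simp only [decide_eq_true_eq]
        omega
      rcases a with _ | a
      · simp [colLen_cons, hjx, h0]
      · simpa [colLen_cons, hjx, h0] using ih ht a

theorem countP_drop_add_eq_colLen (hl : l.Pairwise (· ≥ ·)) {i j : ℕ}
    (hj : j < l.getD i 0) : (l.drop (i + 1)).countP (j < ·) + (i + 1) = colLen l j := by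
  have hi : i < colLen l j := (lt_getD_iff_lt_colLen hl i j).1 hj
  have hlen : i < l.length := hi.trans_le (colLen_le_length j)
  have htake : (l.take (i + 1)).countP (j < ·) = i + 1 := by
    rw [List.countP_eq_length.2, List.length_take]
    · omega
    · intro y hy
      obtain ⟨b, hb, rfl⟩ := List.mem_take_iff_getElem.1 hy
      have := (lt_getD_iff_lt_colLen hl b j).2 (by omega)
      rw [List.getD_eq_getElem _ _ (by omega)] at this
      exact decide_eq_true this
  have h := congrArg (List.countP (j < ·)) (List.take_append_drop (i + 1) l)
  rw [List.countP_append, htake] at h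
  rw [colLen, ← h, add_comm]

theorem hookLen_add_eastStep (hl : l.Pairwise (· ≥ ·)) {i j : ℕ} (hj : j < l.getD i 0) :
    hookLen l i j + eastStep l j = betaNumber l i := by
  have hcount := countP_drop_add_eq_colLen hl hj
  have := colLen_le_length (l := l) j
  rw [hookLen, eastStep, betaNumber]
  omega

theorem betaNumber_lt_eastStep (hl : l.Pairwise (· ≥ ·)) {i : ℕ} (hi : i < l.length) :
    betaNumber l i < eastStep l (l.getD i 0) := by
  have : colLen l (l.getD i 0) ≤ i :=
    not_lt.1 fun h => lt_irrefl _ ((lt_getD_iff_lt_colLen hl i _).2 h)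
  rw [betaNumber, eastStep]
  omega

theorem eastStep_ne_betaNumber (hl : l.Pairwise (· ≥ ·)) (j : ℕ) {a : ℕ}
    (ha : a < l.length) : eastStep l j ≠ betaNumber l a := by
  have hcol := lt_getD_iff_lt_colLen hl a j
  have := colLen_le_length (l := l) j
  rw [eastStep, betaNumber]
  omega

theorem exists_betaNumber_eq_of_lt_of_lt (hl : l.Pairwise (· ≥ ·)) {j x : ℕ}
    (hlo : eastStep l j < x) (hhi : x < eastStep l (j + 1)) :
    ∃ a < l.length, betaNumber l a = x := by
  have := colLen_le_length (l := l) j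
  have := colLen_le_length (l := l) (j + 1)
  rw [eastStep] at hlo hhi
  have hlo' := lt_getD_iff_lt_colLen hl (j + l.length - x) j
  have hhi' := lt_getD_iff_lt_colLen hl (j + l.length - x) (j + 1)
  refine ⟨j + l.length - x, by omega, ?_⟩
  rw [betaNumber]
  omega

end BoundaryPath

namespace IsPartitionList

variable {l : List ℕ}

theorem eastStep_zero (hl : IsPartitionList l) : eastStep l 0 = 0 := by
  have : colLen l 0 = l.length :=
    List.countP_eq_length.2 fun p hp => by simpa using hl.2 p hp
  simp [eastStep, this]

theorem betaNumber_pos (hl : IsPartitionList l) {a : ℕ} (ha : a < l.length) :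
    0 < betaNumber l a := by
  have := hl.2 _ (List.getElem_mem ha)
  rw [betaNumber, List.getD_eq_getElem _ _ ha]
  omega

end IsPartitionList

theorem Nat.exists_le_and_lt_succ {α : Type*} [LinearOrder α] (f : ℕ → α) {x : α} {n : ℕ}
    (h0 : f 0 ≤ x) (hn : x < f n) : ∃ j < n, f j ≤ x ∧ x < f (j + 1) := by
  induction n with
  | zero => exact absurd hn (not_lt.2 h0)
  | succ n ih =>
    by_cases hx : x < f n
    · obtain ⟨j, hj, h⟩ := ih hx
      exact ⟨j, by omega, h⟩
    · exact ⟨n, n.lt_succ_self, not_lt.1 hx, hn⟩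

/-- A gap `x = β_i - s` of the beta-set would lie between two consecutive east steps; it cannot
lie strictly between them, so it is one, `eastStep l j`, and the hook at `(i, j)` is `s`. -/
theorem IsCore.exists_betaNumber_add_eq {l : List ℕ} {s i : ℕ} (hl : IsPartitionList l)
    (hcore : IsCore l s) (hi : i < l.length) (hs : s ≤ betaNumber l i) :
    ∃ a < l.length, betaNumber l a + s = betaNumber l i := by
  by_contra! hgap
  set x := betaNumber l i - s
  have hx : x < betaNumber l i := by have := hgap i hi; omega
  obtain ⟨j, hj, hlo, hhi⟩ := Nat.exists_le_and_lt_succ (eastStep l) (x := x)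
    (hl.eastStep_zero.trans_le (Nat.zero_le x)) (hx.trans (betaNumber_lt_eastStep hl.1 hi))
  rcases hlo.lt_or_eq with hlt | heq
  · obtain ⟨a, ha, hax⟩ := exists_betaNumber_eq_of_lt_of_lt hl.1 hlt hhi
    exact hgap a ha (by omega)
  · have hhook := hookLen_add_eastStep hl.1 hj
    exact hcore _ ⟨i, j, hi, hj, rfl⟩ ⟨1, by omega⟩

theorem exists_betaNumber_add_eq_of_mem_closure {l : List ℕ} {S : Set ℕ}
    (hl : IsPartitionList l) (hcore : ∀ s ∈ S, IsCore l s) {n : ℕ}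
    (hn : n ∈ AddSubmonoid.closure S) :
    ∀ i < l.length, n ≤ betaNumber l i →
      ∃ a < l.length, betaNumber l a + n = betaNumber l i := by
  induction hn using AddSubmonoid.closure_induction with
  | mem s hs => exact fun i hi => (hcore s hs).exists_betaNumber_add_eq hl hi
  | zero => exact fun i hi _ => ⟨i, hi, rfl⟩
  | add m n _ _ ihm ihn =>
    intro i hi hle
    obtain ⟨a, ha, hai⟩ := ihm i hi (by omega)
    obtain ⟨b, hb, hba⟩ := ihn a ha (by omega)
    exact ⟨b, hb, by omega⟩

theorem IsPartitionList.betaNumber_zero_notMem_closure {l : List ℕ} {S : Set ℕ}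
    (hl : IsPartitionList l) (hcore : ∀ s ∈ S, IsCore l s) (hne : l ≠ []) :
    betaNumber l 0 ∉ AddSubmonoid.closure S := by
  intro hmem
  have h0 : 0 < l.length := List.length_pos_iff.2 hne
  obtain ⟨a, ha, hsum⟩ := exists_betaNumber_add_eq_of_mem_closure hl hcore hmem 0 h0 le_rfl
  have := hl.betaNumber_pos ha
  omega

theorem finite_setOf_length_le_and_forall_lt (n m : ℕ) :
    {l : List ℕ | l.length ≤ n ∧ ∀ x ∈ l, x < m}.Finite := by
  refine ((List.finite_length_le (Fin m) n).image (List.map Fin.val)).subset ?_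
  rintro l ⟨hlen, hlt⟩
  exact ⟨l.pmap Fin.mk hlt, by simpa using hlen, by simp [List.map_pmap]⟩

theorem finite_setOf_betaNumber_zero_le (N : ℕ) :
    {l : List ℕ | IsPartitionList l ∧ betaNumber l 0 ≤ N}.Finite := by
  refine (finite_setOf_length_le_and_forall_lt N (N + 1)).subset ?_
  rintro (_ | ⟨x, t⟩) ⟨hl, hN⟩
  · simp
  · have hx := hl.2 x List.mem_cons_self
    have hxt := (List.pairwise_cons.1 hl.1).1
    simp only [betaNumber, List.getD_cons_zero, List.length_cons] at hN
    simp only [Set.mem_ofPred_eq, List.length_cons, List.mem_cons, forall_eq_or_imp]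
    exact ⟨by omega, by omega, fun y hy => by have := hxt y hy; omega⟩

theorem Finset.gcd_id_eq_setGcd (S : Finset ℕ) : S.gcd id = Nat.setGcd S :=
  Nat.dvd_antisymm (Nat.dvd_setGcd_iff.2 fun _ hm => Finset.gcd_dvd hm)
    (Finset.dvd_gcd fun _ hm => Nat.setGcd_dvd_of_mem hm)

theorem finite_setOf_isCore_of_gcd_eq_one {S : Finset ℕ} (h : S.gcd id = 1) :
    {l : List ℕ | IsPartitionList l ∧ ∀ s ∈ S, IsCore l s}.Finite := by
  obtain ⟨N, hN⟩ := Nat.exists_mem_closure_of_ge (S : Set ℕ)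
  refine (finite_setOf_betaNumber_zero_le N).subset fun l ⟨hl, hcore⟩ => ⟨hl, ?_⟩
  rcases eq_or_ne l [] with rfl | hne
  · simp [betaNumber]
  by_contra! hlt
  have hdvd : Nat.setGcd S ∣ betaNumber l 0 := by simp [← S.gcd_id_eq_setGcd, h]
  exact hl.betaNumber_zero_notMem_closure hcore hne (hN _ hlt.le hdvd)

theorem IsCore.of_dvd {l : List ℕ} {d t : ℕ} (hcore : IsCore l d) (hdt : d ∣ t) :
    IsCore l t :=
  fun h hh ht => hcore h hh (hdt.trans ht)

def scaledStaircase (c k : ℕ) : List ℕ := (List.range k).map (fun a => c * (k - a))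

section ScaledStaircase

variable {c k : ℕ}

@[simp]
theorem length_scaledStaircase : (scaledStaircase c k).length = k := by
  simp [scaledStaircase]

theorem getD_scaledStaircase {a : ℕ} (ha : a < k) :
    (scaledStaircase c k).getD a 0 = c * (k - a) := by
  simp [scaledStaircase, ha]

theorem isPartitionList_scaledStaircase (hc : 0 < c) :
    IsPartitionList (scaledStaircase c k) := by
  refine ⟨List.pairwise_map.2 (List.pairwise_lt_range.imp fun hab =>
    Nat.mul_le_mul_left c (by omega)), ?_⟩
  simp only [scaledStaircase, List.mem_map, List.mem_range]
  rintro _ ⟨a, ha, rfl⟩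
  exact Nat.mul_pos hc (by omega)

theorem betaNumber_scaledStaircase_add_one {a : ℕ} (ha : a < k) :
    betaNumber (scaledStaircase c k) a + 1 = (c + 1) * (k - a) := by
  rw [betaNumber, getD_scaledStaircase ha, length_scaledStaircase, add_mul, one_mul]
  omega

/-- A hook `(c + 1) q` at `(i, j)` would make the east step
`β_i - (c + 1) q = (c + 1)(k - i - q) - 1` the beta number of row `i + q`. -/
theorem isCore_scaledStaircase (hc : 0 < c) (k : ℕ) :
    IsCore (scaledStaircase c k) (c + 1) := by
  rintro _ ⟨i, j, hi, hj, rfl⟩ ⟨q, hq⟩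
  rw [length_scaledStaircase] at hi
  have hl := isPartitionList_scaledStaircase (k := k) hc
  have hsum := hookLen_add_eastStep hl.1 hj
  have hbeta := betaNumber_scaledStaircase_add_one (c := c) hi
  have hhook : 0 < hookLen (scaledStaircase c k) i j := by
    rw [hookLen]
    omega
  have hq0 : 0 < q := Nat.pos_of_ne_zero fun h => by simp [h] at hq; omega
  have hqi : q < k - i := Nat.lt_of_mul_lt_mul_left (a := c + 1) (by omega)
  have hsplit : (c + 1) * (k - i) = (c + 1) * (k - (i + q)) + (c + 1) * q := by
    rw [← mul_add]
    congr 1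
    omega
  have hbeta' := betaNumber_scaledStaircase_add_one (c := c) (k := k) (a := i + q) (by omega)
  exact eastStep_ne_betaNumber hl.1 j (a := i + q) (by simp only [length_scaledStaircase]; omega)
    (by omega)

end ScaledStaircase

theorem Finset.exists_two_le_forall_dvd_of_gcd_ne_one {S : Finset ℕ} (h : S.gcd id ≠ 1) :
    ∃ d, 2 ≤ d ∧ ∀ s ∈ S, d ∣ s := by
  by_cases h0 : S.gcd id = 0
  · refine ⟨2, le_rfl, fun s hs => ?_⟩
    rw [show s = 0 from Finset.gcd_eq_zero_iff.1 h0 s hs]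
    exact dvd_zero 2
  · exact ⟨S.gcd id, by omega, fun s hs => Finset.gcd_dvd hs⟩

theorem infinite_setOf_isCore_of_gcd_ne_one {S : Finset ℕ} (h : S.gcd id ≠ 1) :
    {l : List ℕ | IsPartitionList l ∧ ∀ s ∈ S, IsCore l s}.Infinite := by
  obtain ⟨d, hd, hdvd⟩ := Finset.exists_two_le_forall_dvd_of_gcd_ne_one h
  have hcore : ∀ k, IsCore (scaledStaircase (d - 1) k) d := fun k => by
    simpa [Nat.sub_add_cancel (by omega : 1 ≤ d)] using
      isCore_scaledStaircase (c := d - 1) (by omega) k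
  refine Set.infinite_of_injective_forall_mem (f := scaledStaircase (d - 1))
    (fun k₁ k₂ hk => by simpa using congrArg List.length hk) fun k => ?_
  exact ⟨isPartitionList_scaledStaircase (by omega), fun s hs => (hcore k).of_dvd (hdvd s hs)⟩

theorem stmt7_general (S : Finset ℕ) :
    {l : List ℕ | IsPartitionList l ∧ ∀ s ∈ S, IsCore l s}.Finite ↔
      S.gcd id = 1 :=
  ⟨fun hfin => not_not.1 fun h => infinite_setOf_isCore_of_gcd_ne_one h hfin,
    finite_setOf_isCore_of_gcd_eq_one⟩

theorem stmt7 (S : Finset ℕ) (hS : S.Nonempty) (hpos : ∀ s ∈ S, 0 < s) :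
    {l : List ℕ | IsPartitionList l ∧ ∀ s ∈ S, IsCore l s}.Finite ↔
      S.gcd id = 1 :=
  stmt7_general S
end

section
/- The number of partitions of n that are 3-cores with complete hookset (i.e., the hookset equals an initial segment {1,2,4,5,7,8,...,N} of the non-multiples of 3) has generating function 1 + q + 2·Σ_{k≥2} (q^{k²} + q^{k²-k}). Equivalently, for n ≥ 2 there are exactly two such partitions if n = k² or n = k² - k for some k ≥ 2, and none otherwise. -/
/-- A 3-core with complete hookset: the hookset is an initial segment of the
positive non-multiples of 3. -/
def CompleteHookset3 (l : List ℕ) : Prop :=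
  IsCore l 3 ∧ ∃ N : ℕ, hookset l = {h | 0 < h ∧ ¬ 3 ∣ h ∧ h ≤ N}

theorem isPartitionList_nil : IsPartitionList [] := ⟨List.Pairwise.nil, by simp⟩

theorem IsPartitionList.le_headD {l : List ℕ} (hl : IsPartitionList l) {y : ℕ} (hy : y ∈ l) :
    y ≤ l.headD 0 := by
  cases l with
  | nil => simp at hy
  | cons z l =>
    rcases List.mem_cons.1 hy with rfl | hy
    · exact le_rfl
    · exact List.rel_of_pairwise_cons hl.1 hy

theorem isPartitionList_cons {x : ℕ} {l : List ℕ} :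
    IsPartitionList (x :: l) ↔ 0 < x ∧ l.headD 0 ≤ x ∧ IsPartitionList l := by
  constructor
  · rintro ⟨hpair, hpos⟩
    rw [List.pairwise_cons] at hpair
    refine ⟨hpos x List.mem_cons_self, ?_, hpair.2, fun p hp => hpos p (List.mem_cons_of_mem x hp)⟩
    cases l with
    | nil => exact Nat.zero_le x
    | cons y l => exact hpair.1 y List.mem_cons_self
  · rintro ⟨hx, hhead, hl⟩
    refine ⟨List.pairwise_cons.2 ⟨fun y hy => (hl.le_headD hy).trans hhead, hl.1⟩, ?_⟩
    rintro p (_ | ⟨_, hp⟩)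
    exacts [hx, hl.2 p hp]

/-- The first-column hook lengths `λᵢ + (m - 1 - i)` of a partition `λ` with `m` parts. -/
def betaSet : List ℕ → Finset ℕ
  | [] => ∅
  | x :: l => insert (x + l.length) (betaSet l)

theorem IsPartitionList.lt_of_mem_betaSet {l : List ℕ} (hl : IsPartitionList l) {b : ℕ}
    (hb : b ∈ betaSet l) : b < l.headD 0 + l.length := by
  induction l with
  | nil => simp [betaSet] at hb
  | cons x l ih =>
    obtain ⟨-, hhead, hl⟩ := isPartitionList_cons.1 hl
    rcases Finset.mem_insert.1 hb with rfl | hb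
    · simp
    · have := ih hl hb
      simp only [List.headD_cons, List.length_cons]
      omega

theorem IsPartitionList.zero_notMem_betaSet {l : List ℕ} (hl : IsPartitionList l) :
    0 ∉ betaSet l := by
  induction l with
  | nil => simp [betaSet]
  | cons x l ih =>
    obtain ⟨hx, -, hl⟩ := isPartitionList_cons.1 hl
    simp only [betaSet, Finset.mem_insert, not_or]
    exact ⟨by omega, ih hl⟩

theorem IsPartitionList.card_betaSet {l : List ℕ} (hl : IsPartitionList l) :
    (betaSet l).card = l.length := by
  induction l with
  | nil => rfl
  | cons x l ih =>
    obtain ⟨-, hhead, hl'⟩ := isPartitionList_cons.1 hl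
    rw [betaSet, Finset.card_insert_of_notMem fun h => by have := hl'.lt_of_mem_betaSet h; omega,
      ih hl', List.length_cons]

theorem Finset.eq_and_eq_of_insert_eq_insert {α : Type*} [LinearOrder α] {s t : Finset α} {a b : α}
    (hs : ∀ x ∈ s, x < a) (ht : ∀ x ∈ t, x < b) (h : insert a s = insert b t) : a = b ∧ s = t := by
  have hab : a ≤ b := by
    rcases Finset.mem_insert.1 (h ▸ Finset.mem_insert_self a s) with h | h
    exacts [h.le, (ht a h).le]
  have hba : b ≤ a := by
    rcases Finset.mem_insert.1 (h ▸ Finset.mem_insert_self b t) with h | h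
    exacts [h.le, (hs b h).le]
  obtain rfl := le_antisymm hab hba
  refine ⟨rfl, ?_⟩
  rw [← Finset.erase_insert fun h => (hs a h).false, h,
    Finset.erase_insert fun h => (ht a h).false]

theorem IsPartitionList.eq_of_betaSet_eq {l₁ l₂ : List ℕ} (h₁ : IsPartitionList l₁)
    (h₂ : IsPartitionList l₂) (h : betaSet l₁ = betaSet l₂) : l₁ = l₂ := by
  induction l₁ generalizing l₂ with
  | nil =>
    cases l₂ with
    | nil => rfl
    | cons y l₂ => exact absurd h.symm (Finset.insert_ne_empty _ _)
  | cons x l₁ ih =>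
    cases l₂ with
    | nil => exact absurd h (Finset.insert_ne_empty _ _)
    | cons y l₂ =>
      obtain ⟨-, hx, h₁'⟩ := isPartitionList_cons.1 h₁
      obtain ⟨-, hy, h₂'⟩ := isPartitionList_cons.1 h₂
      obtain ⟨hhead, htail⟩ := Finset.eq_and_eq_of_insert_eq_insert
        (fun b hb => (h₁'.lt_of_mem_betaSet hb).trans_le (by omega))
        (fun b hb => (h₂'.lt_of_mem_betaSet hb).trans_le (by omega)) h
      obtain rfl := ih h₁' h₂' htail
      rw [Nat.add_right_cancel hhead]

theorem hookset_cons (x : ℕ) (l : List ℕ) :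
    hookset (x :: l) = {h | ∃ j < x, h = hookLen (x :: l) 0 j} ∪ hookset l := by
  ext h
  simp only [hookset, Set.mem_ofPred_eq, Set.mem_union]
  constructor
  · rintro ⟨_ | i, j, hi, hj, rfl⟩
    · exact Or.inl ⟨j, hj, rfl⟩
    · exact Or.inr ⟨i, j, by simpa using hi, hj, rfl⟩
  · rintro (⟨j, hj, rfl⟩ | ⟨i, j, hi, hj, rfl⟩)
    · exact ⟨0, j, by simp, hj, rfl⟩
    · exact ⟨i + 1, j, by simpa using hi, hj, rfl⟩

/-- The gap of the beta set of `x :: l` at which the hook of the first-row cell in column `j`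
ends. -/
def hookGap (l : List ℕ) (j : ℕ) : ℕ := j + (l.length - l.countP (fun a => decide (j < a)))

theorem strictMono_hookGap (l : List ℕ) : StrictMono (hookGap l) := fun j₁ j₂ h => by
  have : l.countP (fun a => decide (j₂ < a)) ≤ l.countP (fun a => decide (j₁ < a)) :=
    List.countP_mono_left fun a _ => by simp only [decide_eq_true_eq]; omega
  unfold hookGap
  omega

theorem hookLen_cons_zero {x : ℕ} (l : List ℕ) {j : ℕ} (hj : j < x) :
    hookLen (x :: l) 0 j = x + l.length - hookGap l j := by
  have := List.countP_le_length (p := fun a => decide (j < a)) (l := l)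
  change (x - j) + l.countP _ = _
  unfold hookGap
  omega

theorem IsPartitionList.hookGap_notMem_betaSet {l : List ℕ} (hl : IsPartitionList l) (j : ℕ) :
    hookGap l j ∉ betaSet l := by
  induction l with
  | nil => simp [betaSet]
  | cons y l ih =>
    obtain ⟨-, hy, hl'⟩ := isPartitionList_cons.1 hl
    unfold hookGap at ih ⊢
    by_cases hjy : j < y
    · have hcount := List.countP_le_length (p := fun a => decide (j < a)) (l := l)
      rw [List.countP_cons_of_pos (by simpa using hjy), List.length_cons, betaSet,
        Finset.mem_insert, not_or]
      exact ⟨by omega, by simpa using ih hl'⟩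
    · have hcount : (y :: l).countP (fun a => decide (j < a)) = 0 :=
        List.countP_eq_zero.2 fun a ha => by simpa using (hl.le_headD ha).trans (not_lt.1 hjy)
      rw [hcount]
      intro hmem
      have := hl.lt_of_mem_betaSet hmem
      simp only [List.headD_cons, List.length_cons] at this
      omega

theorem IsPartitionList.image_hookGap {x : ℕ} {l : List ℕ} (hl : IsPartitionList (x :: l)) :
    (Finset.range x).image (hookGap l) = Finset.range (x + l.length) \ betaSet l := by
  obtain ⟨-, hhead, hl'⟩ := isPartitionList_cons.1 hl
  refine Finset.eq_of_subset_of_card_le (fun c hc => ?_) ?_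
  · obtain ⟨j, hj, rfl⟩ := Finset.mem_image.1 hc
    have := List.countP_le_length (p := fun a => decide (j < a)) (l := l)
    rw [Finset.mem_range] at hj
    exact Finset.mem_sdiff.2 ⟨Finset.mem_range.2 (by unfold hookGap; omega),
      hl'.hookGap_notMem_betaSet j⟩
  · have hbeta : betaSet l ⊆ Finset.range (x + l.length) := fun b hb => by
      have := hl'.lt_of_mem_betaSet hb
      rw [Finset.mem_range]
      omega
    rw [Finset.card_image_of_injective _ (strictMono_hookGap l).injective,
      Finset.card_sdiff_of_subset hbeta, Finset.card_range, Finset.card_range, hl'.card_betaSet]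
    omega

theorem IsPartitionList.firstRow_hooks {x : ℕ} {l : List ℕ} (hl : IsPartitionList (x :: l)) :
    {h | ∃ j < x, h = hookLen (x :: l) 0 j} =
      {h | ∃ c < x + l.length, c ∉ betaSet l ∧ h = x + l.length - c} := by
  ext h
  constructor
  · rintro ⟨j, hj, rfl⟩
    have hc := hl.image_hookGap ▸ Finset.mem_image_of_mem (hookGap l) (Finset.mem_range.2 hj)
    obtain ⟨hc, hcn⟩ := Finset.mem_sdiff.1 hc
    exact ⟨hookGap l j, Finset.mem_range.1 hc, hcn, hookLen_cons_zero l hj⟩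
  · rintro ⟨c, hc, hcn, rfl⟩
    have hc : c ∈ (Finset.range x).image (hookGap l) :=
      hl.image_hookGap ▸ Finset.mem_sdiff.2 ⟨Finset.mem_range.2 hc, hcn⟩
    obtain ⟨j, hj, rfl⟩ := Finset.mem_image.1 hc
    exact ⟨j, Finset.mem_range.1 hj, (hookLen_cons_zero l (Finset.mem_range.1 hj)).symm⟩

theorem IsPartitionList.hookset_eq {l : List ℕ} (hl : IsPartitionList l) :
    hookset l = {h | ∃ b ∈ betaSet l, ∃ c < b, c ∉ betaSet l ∧ h = b - c} := by
  induction l with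
  | nil => simp [hookset, betaSet]
  | cons x l ih =>
    obtain ⟨-, hhead, hl'⟩ := isPartitionList_cons.1 hl
    have hlt (b : ℕ) (hb : b ∈ betaSet l) : b < x + l.length := by
      have := hl'.lt_of_mem_betaSet hb
      omega
    rw [hookset_cons, hl.firstRow_hooks, ih hl']
    ext h
    simp only [betaSet, Set.mem_union, Set.mem_ofPred_eq, Finset.mem_insert, not_or]
    constructor
    · rintro (⟨c, hc, hcn, rfl⟩ | ⟨b, hb, c, hcb, hcn, rfl⟩)
      · exact ⟨_, Or.inl rfl, c, hc, ⟨hc.ne, hcn⟩, rfl⟩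
      · exact ⟨b, Or.inr hb, c, hcb, ⟨by have := hlt b hb; omega, hcn⟩, rfl⟩
    · rintro ⟨b, rfl | hb, c, hcb, ⟨-, hcn⟩, rfl⟩
      · exact Or.inl ⟨c, hcb, hcn, rfl⟩
      · exact Or.inr ⟨b, hb, c, hcb, hcn, rfl⟩

/-- The beta set of a `3`-core on the `3`-abacus: `a` beads on runner `1`, `b` on runner `2`. -/
def abacusSet (a b : ℕ) : Finset ℕ :=
  (Finset.range a).image (fun i => 3 * i + 1) ∪ (Finset.range b).image (fun i => 3 * i + 2)

theorem mem_abacusSet {a b x : ℕ} :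
    x ∈ abacusSet a b ↔ (x % 3 = 1 ∧ x < 3 * a) ∨ (x % 3 = 2 ∧ x < 3 * b) := by
  simp only [abacusSet, Finset.mem_union, Finset.mem_image, Finset.mem_range]
  constructor
  · rintro (⟨i, hi, rfl⟩ | ⟨i, hi, rfl⟩) <;> omega
  · rintro (⟨h1, h2⟩ | ⟨h1, h2⟩)
    · exact Or.inl ⟨x / 3, by omega, by omega⟩
    · exact Or.inr ⟨x / 3, by omega, by omega⟩

theorem Nat.exists_forall_iff_lt_of_pred {P : ℕ → Prop} (hP : ∃ n, ¬ P n)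
    (hpred : ∀ i, P (i + 1) → P i) : ∃ c, ∀ i, P i ↔ i < c := by
  classical
  refine ⟨Nat.find hP, fun i => ⟨fun hi => ?_, fun hi => not_not.1 (Nat.find_min hP hi)⟩⟩
  by_contra hle
  have hdown : ∀ k, Nat.find hP ≤ k → P k → P (Nat.find hP) := by
    intro k hk
    induction k, hk using Nat.le_induction with
    | base => exact id
    | succ k _ ih => exact fun h => ih (hpred k h)
  exact Nat.find_spec hP (hdown i (not_lt.1 hle) hi)

theorem exists_eq_abacusSet {s : Finset ℕ} (hdvd : ∀ x ∈ s, ¬ 3 ∣ x)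
    (hsub : ∀ x ∈ s, 3 ≤ x → x - 3 ∈ s) : ∃ a b, s = abacusSet a b := by
  have runner (r : ℕ) : ∃ c, ∀ i, 3 * i + r ∈ s ↔ i < c := by
    obtain ⟨n, hn⟩ := s.exists_nat_subset_range
    refine Nat.exists_forall_iff_lt_of_pred ⟨n, fun h => ?_⟩ fun i h => ?_
    · have := Finset.mem_range.1 (hn h)
      omega
    · have := hsub _ h (by omega)
      rwa [show 3 * (i + 1) + r - 3 = 3 * i + r by omega] at this
  obtain ⟨a, ha⟩ := runner 1
  obtain ⟨b, hb⟩ := runner 2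
  refine ⟨a, b, Finset.ext fun x => ?_⟩
  obtain ⟨q, r, hr, rfl⟩ : ∃ q r, r < 3 ∧ x = 3 * q + r := ⟨x / 3, x % 3, by omega, by omega⟩
  rw [mem_abacusSet]
  interval_cases r
  · exact iff_of_false (fun h => hdvd _ h (by omega)) (by omega)
  · rw [ha]
    omega
  · rw [hb]
    omega

theorem IsCore.sub_mem_betaSet {l : List ℕ} {t : ℕ} (hl : IsPartitionList l) (hcore : IsCore l t)
    {b : ℕ} (hb : b ∈ betaSet l) (htb : t ≤ b) : b - t ∈ betaSet l := by
  by_contra hgap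
  have hlt : b - t < b := (Nat.sub_le b t).lt_of_ne fun h => hgap (by rwa [h])
  refine hcore t ?_ dvd_rfl
  rw [hl.hookset_eq]
  exact ⟨b, hb, b - t, hlt, hgap, by omega⟩

theorem IsCore.not_dvd_of_mem_betaSet {l : List ℕ} {t : ℕ} (hl : IsPartitionList l)
    (hcore : IsCore l t) {b : ℕ} (hb : b ∈ betaSet l) : ¬ t ∣ b := by
  have hpos : 0 < b := Nat.pos_of_ne_zero fun h => hl.zero_notMem_betaSet (h ▸ hb)
  refine hcore b ?_
  rw [hl.hookset_eq]
  exact ⟨b, hb, 0, hpos, hl.zero_notMem_betaSet, rfl⟩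

theorem IsCore.exists_betaSet_eq_abacusSet {l : List ℕ} (hl : IsPartitionList l)
    (hcore : IsCore l 3) : ∃ a b, betaSet l = abacusSet a b :=
  exists_eq_abacusSet (fun _ hx => hcore.not_dvd_of_mem_betaSet hl hx)
    (fun _ hx h3 => hcore.sub_mem_betaSet hl hx h3)

theorem IsPartitionList.hookset_eq_abacusSet {l : List ℕ} {a b : ℕ} (hl : IsPartitionList l)
    (hbeta : betaSet l = abacusSet a b) :
    hookset l = abacusSet (max a (b - a)) (max b (a - b - 1)) := by
  ext h
  simp only [hl.hookset_eq, hbeta, Set.mem_ofPred_eq, Finset.mem_coe, mem_abacusSet]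
  constructor
  · rintro ⟨x, hx, c, hcx, hc, rfl⟩
    omega
  · intro hh
    by_cases hbead : (h % 3 = 1 ∧ h < 3 * a) ∨ (h % 3 = 2 ∧ h < 3 * b)
    · exact ⟨h, hbead, 0, by omega, by omega, rfl⟩
    · -- a hook from a bead on the other runner down to the lowest gap `c` on the runner of `h`
      obtain ⟨c, hc⟩ : ∃ c, c = if h % 3 = 1 then 3 * a + 1 else 3 * b + 2 := ⟨_, rfl⟩
      exact ⟨h + c, by split_ifs at hc <;> omega, c, by omega,
        by split_ifs at hc <;> omega, by omega⟩

theorem IsPartitionList.isCore_three_of_betaSet_eq {l : List ℕ} {a b : ℕ} (hl : IsPartitionList l)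
    (hbeta : betaSet l = abacusSet a b) : IsCore l 3 := by
  intro h hh
  rw [hl.hookset_eq_abacusSet hbeta, Finset.mem_coe, mem_abacusSet] at hh
  omega

theorem exists_coe_abacusSet_eq_iff {A B : ℕ} :
    (∃ N, (abacusSet A B : Set ℕ) = {h | 0 < h ∧ ¬ 3 ∣ h ∧ h ≤ N}) ↔ A = B ∨ A = B + 1 := by
  constructor
  · rintro ⟨N, hN⟩
    have hmem (h : ℕ) : (h % 3 = 1 ∧ h < 3 * A) ∨ (h % 3 = 2 ∧ h < 3 * B) ↔
        0 < h ∧ ¬ 3 ∣ h ∧ h ≤ N := by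
      rw [← mem_abacusSet, ← Finset.mem_coe, hN, Set.mem_ofPred_eq]
    have := hmem (3 * A + 1)
    have := hmem (3 * A - 2)
    have := hmem (3 * B + 2)
    have := hmem (3 * B - 1)
    omega
  · intro hAB
    refine ⟨2 * A + B - 1, Set.ext fun h => ?_⟩
    rw [Finset.mem_coe, mem_abacusSet, Set.mem_ofPred_eq]
    omega

theorem IsPartitionList.completeHookset3_iff {l : List ℕ} (hl : IsPartitionList l) :
    CompleteHookset3 l ↔
      ∃ a b, betaSet l = abacusSet a b ∧ (a = b ∨ a = 0 ∨ b = 0 ∨ a = b + 1) := by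
  constructor
  · rintro ⟨hcore, hcomplete⟩
    obtain ⟨a, b, hbeta⟩ := hcore.exists_betaSet_eq_abacusSet hl
    rw [hl.hookset_eq_abacusSet hbeta, exists_coe_abacusSet_eq_iff] at hcomplete
    exact ⟨a, b, hbeta, by omega⟩
  · rintro ⟨a, b, hbeta, hab⟩
    refine ⟨hl.isCore_three_of_betaSet_eq hbeta, ?_⟩
    rw [hl.hookset_eq_abacusSet hbeta, exists_coe_abacusSet_eq_iff]
    omega

def oddStaircase : ℕ → List ℕ
  | 0 => []
  | k + 1 => (2 * k + 1) :: oddStaircase k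

def evenStaircase : ℕ → List ℕ
  | 0 => []
  | k + 1 => (2 * k + 2) :: evenStaircase k

/-- Its tail is the fourth family `(k, k-1, k-1, ..., 1, 1)`. -/
def doubleStaircase : ℕ → List ℕ
  | 0 => []
  | k + 1 => (k + 1) :: (k + 1) :: doubleStaircase k

@[simp] theorem length_oddStaircase (k : ℕ) : (oddStaircase k).length = k := by
  induction k <;> simp [oddStaircase, *]

@[simp] theorem length_evenStaircase (k : ℕ) : (evenStaircase k).length = k := by
  induction k <;> simp [evenStaircase, *]

@[simp] theorem length_doubleStaircase (k : ℕ) : (doubleStaircase k).length = 2 * k := by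
  induction k <;> simp [doubleStaircase, *]; ring

theorem sum_oddStaircase (k : ℕ) : (oddStaircase k).sum = k ^ 2 := by
  induction k <;> simp [oddStaircase, *]; ring

theorem sum_evenStaircase (k : ℕ) : (evenStaircase k).sum = k ^ 2 + k := by
  induction k <;> simp [evenStaircase, *]; ring

theorem sum_doubleStaircase (k : ℕ) : (doubleStaircase k).sum = k ^ 2 + k := by
  induction k <;> simp [doubleStaircase, *]; ring

theorem sum_tail_doubleStaircase (k : ℕ) : (doubleStaircase k).tail.sum = k ^ 2 := by
  cases k <;> simp [doubleStaircase, sum_doubleStaircase]; ring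

theorem isPartitionList_oddStaircase (k : ℕ) : IsPartitionList (oddStaircase k) := by
  induction k with
  | zero => exact isPartitionList_nil
  | succ k ih =>
    refine isPartitionList_cons.2 ⟨by omega, ?_, ih⟩
    cases k <;> simp [oddStaircase]

theorem isPartitionList_evenStaircase (k : ℕ) : IsPartitionList (evenStaircase k) := by
  induction k with
  | zero => exact isPartitionList_nil
  | succ k ih =>
    refine isPartitionList_cons.2 ⟨by omega, ?_, ih⟩
    cases k <;> simp [evenStaircase]

theorem isPartitionList_doubleStaircase (k : ℕ) : IsPartitionList (doubleStaircase k) := by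
  induction k with
  | zero => exact isPartitionList_nil
  | succ k ih =>
    refine isPartitionList_cons.2 ⟨by omega, le_rfl, isPartitionList_cons.2 ⟨by omega, ?_, ih⟩⟩
    cases k <;> simp [doubleStaircase]

theorem isPartitionList_tail_doubleStaircase (k : ℕ) :
    IsPartitionList (doubleStaircase k).tail := by
  cases k with
  | zero => exact isPartitionList_nil
  | succ k => exact (isPartitionList_cons.1 (isPartitionList_doubleStaircase (k + 1))).2.2

theorem betaSet_oddStaircase (k : ℕ) : betaSet (oddStaircase k) = abacusSet k 0 := by
  induction k with
  | zero => rfl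
  | succ k ih =>
    ext x
    simp only [oddStaircase, betaSet, ih, Finset.mem_insert, mem_abacusSet, length_oddStaircase]
    omega

theorem betaSet_evenStaircase (k : ℕ) : betaSet (evenStaircase k) = abacusSet 0 k := by
  induction k with
  | zero => rfl
  | succ k ih =>
    ext x
    simp only [evenStaircase, betaSet, ih, Finset.mem_insert, mem_abacusSet, length_evenStaircase]
    omega

theorem betaSet_doubleStaircase (k : ℕ) : betaSet (doubleStaircase k) = abacusSet k k := by
  induction k with
  | zero => rfl
  | succ k ih =>
    ext x
    simp only [doubleStaircase, betaSet, ih, Finset.mem_insert, mem_abacusSet,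
      length_doubleStaircase, List.length_cons]
    omega

theorem betaSet_tail_doubleStaircase (k : ℕ) :
    betaSet (doubleStaircase k).tail = abacusSet k (k - 1) := by
  cases k with
  | zero => rfl
  | succ k =>
    ext x
    simp only [doubleStaircase, List.tail_cons, betaSet, betaSet_doubleStaircase,
      Finset.mem_insert, mem_abacusSet, length_doubleStaircase]
    omega

theorem isPartitionList_and_completeHookset3_iff {l : List ℕ} :
    IsPartitionList l ∧ CompleteHookset3 l ↔ ∃ k, l = oddStaircase k ∨ l = evenStaircase k ∨
      l = doubleStaircase k ∨ l = (doubleStaircase k).tail := by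
  constructor
  · rintro ⟨hl, hcomplete⟩
    obtain ⟨a, b, hbeta, rfl | rfl | rfl | rfl⟩ := hl.completeHookset3_iff.1 hcomplete
    · refine ⟨a, Or.inr <| Or.inr <| Or.inl ?_⟩
      exact hl.eq_of_betaSet_eq (isPartitionList_doubleStaircase a)
        (hbeta.trans (betaSet_doubleStaircase a).symm)
    · refine ⟨b, Or.inr <| Or.inl ?_⟩
      exact hl.eq_of_betaSet_eq (isPartitionList_evenStaircase b)
        (hbeta.trans (betaSet_evenStaircase b).symm)
    · refine ⟨a, Or.inl ?_⟩
      exact hl.eq_of_betaSet_eq (isPartitionList_oddStaircase a)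
        (hbeta.trans (betaSet_oddStaircase a).symm)
    · refine ⟨b + 1, Or.inr <| Or.inr <| Or.inr ?_⟩
      exact hl.eq_of_betaSet_eq (isPartitionList_tail_doubleStaircase (b + 1))
        (hbeta.trans (betaSet_tail_doubleStaircase (b + 1)).symm)
  · rintro ⟨k, rfl | rfl | rfl | rfl⟩
    · exact ⟨isPartitionList_oddStaircase k, (isPartitionList_oddStaircase k).completeHookset3_iff.2
        ⟨k, 0, betaSet_oddStaircase k, by omega⟩⟩
    · exact ⟨isPartitionList_evenStaircase k,
        (isPartitionList_evenStaircase k).completeHookset3_iff.2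
        ⟨0, k, betaSet_evenStaircase k, by omega⟩⟩
    · exact ⟨isPartitionList_doubleStaircase k,
        (isPartitionList_doubleStaircase k).completeHookset3_iff.2
        ⟨k, k, betaSet_doubleStaircase k, by omega⟩⟩
    · exact ⟨isPartitionList_tail_doubleStaircase k,
        (isPartitionList_tail_doubleStaircase k).completeHookset3_iff.2
        ⟨k, k - 1, betaSet_tail_doubleStaircase k, by omega⟩⟩

theorem Nat.eq_zero_of_sq_add_self_eq_sq {m k : ℕ} (h : m ^ 2 + m = k ^ 2) : m = 0 := by
  by_contra hm
  exact Nat.not_exists_sq' (m := m) (by omega) (by ring_nf; omega) ⟨k, h.symm⟩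

theorem Nat.sq_add_self_injective : Function.Injective fun k : ℕ => k ^ 2 + k :=
  ((Nat.pow_left_strictMono two_ne_zero).add strictMono_id).injective

theorem setOf_completeHookset3_sum_eq_sq {k : ℕ} (hk : 0 < k) :
    {l : List ℕ | IsPartitionList l ∧ l.sum = k ^ 2 ∧ CompleteHookset3 l} =
      {oddStaircase k, (doubleStaircase k).tail} := by
  ext l
  simp only [Set.mem_ofPred_eq, Set.mem_insert_iff, Set.mem_singleton_iff]
  rw [and_left_comm, isPartitionList_and_completeHookset3_iff]
  constructor
  · rintro ⟨hsum, m, rfl | rfl | rfl | rfl⟩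
    · rw [sum_oddStaircase] at hsum
      rw [Nat.pow_left_injective two_ne_zero hsum]
      exact Or.inl rfl
    · rw [sum_evenStaircase] at hsum
      obtain rfl := Nat.eq_zero_of_sq_add_self_eq_sq hsum
      nlinarith
    · rw [sum_doubleStaircase] at hsum
      obtain rfl := Nat.eq_zero_of_sq_add_self_eq_sq hsum
      nlinarith
    · rw [sum_tail_doubleStaircase] at hsum
      rw [Nat.pow_left_injective two_ne_zero hsum]
      exact Or.inr rfl
  · rintro (rfl | rfl)
    exacts [⟨sum_oddStaircase k, k, Or.inl rfl⟩,
      ⟨sum_tail_doubleStaircase k, k, Or.inr <| Or.inr <| Or.inr rfl⟩]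

theorem setOf_completeHookset3_sum_eq_sq_add_self {k : ℕ} (hk : 0 < k) :
    {l : List ℕ | IsPartitionList l ∧ l.sum = k ^ 2 + k ∧ CompleteHookset3 l} =
      {evenStaircase k, doubleStaircase k} := by
  ext l
  simp only [Set.mem_ofPred_eq, Set.mem_insert_iff, Set.mem_singleton_iff]
  rw [and_left_comm, isPartitionList_and_completeHookset3_iff]
  constructor
  · rintro ⟨hsum, m, rfl | rfl | rfl | rfl⟩
    · rw [sum_oddStaircase] at hsum
      exact absurd (Nat.eq_zero_of_sq_add_self_eq_sq hsum.symm) hk.ne'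
    · rw [sum_evenStaircase] at hsum
      rw [Nat.sq_add_self_injective hsum]
      exact Or.inl rfl
    · rw [sum_doubleStaircase] at hsum
      rw [Nat.sq_add_self_injective hsum]
      exact Or.inr rfl
    · rw [sum_tail_doubleStaircase] at hsum
      exact absurd (Nat.eq_zero_of_sq_add_self_eq_sq hsum.symm) hk.ne'
  · rintro (rfl | rfl)
    exacts [⟨sum_evenStaircase k, k, Or.inr <| Or.inl rfl⟩,
      ⟨sum_doubleStaircase k, k, Or.inr <| Or.inr <| Or.inl rfl⟩]

theorem setOf_completeHookset3_sum_eq_empty {n : ℕ} (hsq : ∀ k, n ≠ k ^ 2)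
    (hpronic : ∀ k, n ≠ k ^ 2 + k) :
    {l : List ℕ | IsPartitionList l ∧ l.sum = n ∧ CompleteHookset3 l} = ∅ := by
  refine Set.eq_empty_of_forall_notMem fun l hl => ?_
  obtain ⟨rfl, k, rfl | rfl | rfl | rfl⟩ :=
    (and_left_comm.1 hl).imp_right isPartitionList_and_completeHookset3_iff.1
  · exact hsq k (sum_oddStaircase k)
  · exact hpronic k (sum_evenStaircase k)
  · exact hpronic k (sum_doubleStaircase k)
  · exact hsq k (sum_tail_doubleStaircase k)

theorem stmt14 (n : ℕ) (hn : 2 ≤ n) :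
    ((∃ k : ℕ, 2 ≤ k ∧ (n = k ^ 2 ∨ n = k ^ 2 - k)) →
      {l : List ℕ | IsPartitionList l ∧ l.sum = n ∧ CompleteHookset3 l}.ncard = 2) ∧
    (¬ (∃ k : ℕ, 2 ≤ k ∧ (n = k ^ 2 ∨ n = k ^ 2 - k)) →
      {l : List ℕ | IsPartitionList l ∧ l.sum = n ∧ CompleteHookset3 l}.ncard = 0) := by
  refine ⟨?_, fun hno => ?_⟩
  · rintro ⟨k, hk, rfl | rfl⟩
    · rw [setOf_completeHookset3_sum_eq_sq (by omega)]
      refine Set.ncard_pair fun h => ?_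
      have := congrArg List.length h
      simp only [length_oddStaircase, List.length_tail, length_doubleStaircase] at this
      omega
    · obtain ⟨m, rfl⟩ : ∃ m, k = m + 1 := ⟨k - 1, by omega⟩
      rw [show (m + 1) ^ 2 - (m + 1) = m ^ 2 + m by ring_nf; omega,
        setOf_completeHookset3_sum_eq_sq_add_self (by omega)]
      refine Set.ncard_pair fun h => ?_
      have := congrArg List.length h
      simp only [length_evenStaircase, length_doubleStaircase] at this
      omega
  · rw [setOf_completeHookset3_sum_eq_empty (fun k hk => ?_) (fun k hk => ?_), Set.ncard_empty]
    · obtain hk2 | hk2 := le_or_gt 2 k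
      · exact hno ⟨k, hk2, Or.inl hk⟩
      · interval_cases k <;> omega
    · refine hno ⟨k + 1, by grind, Or.inr ?_⟩
      rw [hk]
      ring_nf
      omega
end

section
/- Let λ be a partition whose profile path, starting at the bottom-left corner, consists of e east steps and n north steps with e = n (largest part equals number of parts), and suppose for a given positive integer s < e + n the path lies strictly above the diagonal at the point s steps from the start and at the point s steps from the end. Then λ has a hook of length s. -/
/-!
If `s` is not a hook length, then (since a hook length is the distance from an east step of the
profile to a later north step) an east step at position `i` forces an east step at `i + s`.
Pushing each east step among the first `s` steps forward by a multiple of `s` therefore injects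
them into the east steps among the last `s` steps. So more than `s / 2` east steps at the start
leave fewer than `s / 2` north steps at the end.
-/

open Finset

lemma List.countP_drop_eq_card_filter (m : List ℕ) (n : ℕ) (p : ℕ → Bool) :
    (m.drop n).countP p = #{t ∈ Finset.Ico n m.length | p (m.getD t 0)} := by
  induction m generalizing n with
  | nil => simp
  | cons x m ih =>
    cases n with
    | zero =>
      have h := ih 0
      rw [List.drop_zero] at h
      rw [List.drop_zero, List.countP_cons, h, Finset.card_filter, Finset.card_filter,
        List.length_cons, ← Finset.range_eq_Ico, ← Finset.range_eq_Ico, Finset.sum_range_succ']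
      simp
    | succ n =>
      rw [List.drop_succ_cons, ih, List.length_cons, ← Finset.map_add_right_Ico,
        Finset.filter_map, Finset.card_map]
      rfl

section Profile

variable {l : List ℕ}

open scoped Classical

def northStep (l : List ℕ) (a : ℕ) : ℕ := l.getD a 0 + (l.length - 1 - a)

lemma mem_pathSet_iff {i : ℕ} : i ∈ pathSet l ↔ ∀ a < l.length, i ≠ northStep l a := by
  simp [pathSet, northStep]

lemma northStep_lt_northStep (hl : l.Pairwise (· ≥ ·)) {a a' : ℕ} (h : a < a')
    (ha' : a' < l.length) : northStep l a' < northStep l a := by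
  have : l.getD a' 0 ≤ l.getD a 0 := by
    rw [List.getD_eq_getElem _ _ ha', List.getD_eq_getElem _ _ (h.trans ha')]
    exact List.pairwise_iff_getElem.1 hl _ _ _ _ h
  unfold northStep
  omega

lemma northStep_lt_northStep_iff (hl : l.Pairwise (· ≥ ·)) {a a' : ℕ} (ha : a < l.length)
    (ha' : a' < l.length) : northStep l a' < northStep l a ↔ a < a' := by
  refine ⟨fun h => ?_, fun h => northStep_lt_northStep hl h ha'⟩
  by_contra! h'
  rcases h'.eq_or_lt with rfl | h'
  · exact lt_irrefl _ h
  · exact lt_asymm h (northStep_lt_northStep hl h' ha)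

def rowsNorthBefore (l : List ℕ) (p : ℕ) : Finset ℕ :=
  {a ∈ range l.length | northStep l a < p}

-- For an east step `i` this is the column of which step `i` is the bottom edge.
noncomputable def eastCount (l : List ℕ) (p : ℕ) : ℕ := #{i ∈ range p | i ∈ pathSet l}

lemma card_rowsNorthBefore_add_eastCount (hl : l.Pairwise (· ≥ ·)) (p : ℕ) :
    #(rowsNorthBefore l p) + eastCount l p = p := by
  have himage : (rowsNorthBefore l p).image (northStep l) = {i ∈ range p | i ∉ pathSet l} := by
    ext i
    simp only [rowsNorthBefore, mem_image, mem_filter, mem_range, mem_pathSet_iff]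
    push Not
    constructor
    · rintro ⟨a, ⟨ha, hap⟩, rfl⟩
      exact ⟨hap, a, ha, rfl⟩
    · rintro ⟨hip, a, ha, rfl⟩
      exact ⟨a, ⟨ha, hip⟩, rfl⟩
  have hinj : Set.InjOn (northStep l) (rowsNorthBefore l p) := by
    intro a ha a' ha' h
    simp only [rowsNorthBefore, coe_filter, mem_range, Set.mem_ofPred_eq] at ha ha'
    by_contra hne
    rcases Nat.lt_or_gt_of_ne hne with h' | h'
    · exact (northStep_lt_northStep hl h' ha'.1).ne' h
    · exact (northStep_lt_northStep hl h' ha.1).ne h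
  rw [← card_image_of_injOn hinj, himage, eastCount, add_comm]
  convert card_filter_add_card_filter_not (s := range p) (p := (· ∈ pathSet l)) using 1
  rw [card_range]

lemma rowsNorthBefore_northStep (hl : l.Pairwise (· ≥ ·)) {a : ℕ} (ha : a < l.length) :
    rowsNorthBefore l (northStep l a) = Ioo a l.length := by
  ext a'
  simp only [rowsNorthBefore, mem_filter, mem_range, mem_Ioo]
  constructor
  · rintro ⟨ha', h⟩
    exact ⟨(northStep_lt_northStep_iff hl ha ha').1 h, ha'⟩
  · rintro ⟨h, ha'⟩
    exact ⟨ha', northStep_lt_northStep hl h ha'⟩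

lemma eastCount_northStep (hl : l.Pairwise (· ≥ ·)) {a : ℕ} (ha : a < l.length) :
    eastCount l (northStep l a) = l.getD a 0 := by
  have h := card_rowsNorthBefore_add_eastCount hl (northStep l a)
  rw [rowsNorthBefore_northStep hl ha, Nat.card_Ioo] at h
  unfold northStep at h ⊢
  omega

lemma eastCount_mono : Monotone (eastCount l) := fun _ _ h =>
  card_le_card (filter_subset_filter _ (range_subset_range.2 h))

lemma eastCount_succ {i : ℕ} (hi : i ∈ pathSet l) : eastCount l (i + 1) = eastCount l i + 1 := by
  rw [eastCount, eastCount, range_add_one, filter_insert, if_pos hi,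
    card_insert_of_notMem (by simp)]

lemma eastCount_lt_getD_iff (hl : l.Pairwise (· ≥ ·)) {i a : ℕ} (hi : i ∈ pathSet l)
    (ha : a < l.length) : eastCount l i < l.getD a 0 ↔ i < northStep l a := by
  rw [← eastCount_northStep hl ha]
  constructor
  · intro h
    by_contra! h'
    exact (eastCount_mono h').not_gt h
  · intro h
    rw [← Nat.add_one_le_iff, ← eastCount_succ hi]
    exact eastCount_mono h

lemma card_rowsNorthBefore_add_card_filter_lt_getD (hl : l.Pairwise (· ≥ ·)) {i a : ℕ}
    (hi : i ∈ pathSet l) (ha : a < l.length) (hia : i < northStep l a) :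
    #(rowsNorthBefore l i) + #{a' ∈ Ico (a + 1) l.length | eastCount l i < l.getD a' 0}
      = l.length - (a + 1) := by
  have hafter : {a' ∈ Ico (a + 1) l.length | eastCount l i < l.getD a' 0}
      = {a' ∈ Ico (a + 1) l.length | i < northStep l a'} :=
    filter_congr fun a' ha' => eastCount_lt_getD_iff hl hi (mem_Ico.1 ha').2
  have hbefore : rowsNorthBefore l i = {a' ∈ Ico (a + 1) l.length | ¬ i < northStep l a'} := by
    ext a'
    simp only [rowsNorthBefore, mem_filter, mem_range, mem_Ico, not_lt]
    constructor
    · rintro ⟨ha', h⟩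
      have : northStep l a' < northStep l a := h.trans hia
      exact ⟨⟨(northStep_lt_northStep_iff hl ha ha').1 this, ha'⟩, h.le⟩
    · rintro ⟨⟨_, ha'⟩, h⟩
      exact ⟨ha', h.lt_of_ne fun h' => mem_pathSet_iff.1 hi a' ha' h'.symm⟩
  rw [hafter, hbefore, add_comm, card_filter_add_card_filter_not, Nat.card_Ico]

theorem northStep_sub_mem_hookset (hl : l.Pairwise (· ≥ ·)) {i a : ℕ} (hi : i ∈ pathSet l)
    (ha : a < l.length) (hia : i < northStep l a) : northStep l a - i ∈ hookset l := by
  have hb : eastCount l i < l.getD a 0 := (eastCount_lt_getD_iff hl hi ha).2 hia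
  -- The hook of cell `(a, eastCount l i)` runs from step `i` to step `northStep l a`.
  refine ⟨a, eastCount l i, ha, hb, ?_⟩
  have hrows := card_rowsNorthBefore_add_card_filter_lt_getD hl hi ha hia
  have hcount := card_rowsNorthBefore_add_eastCount hl i
  rw [hookLen, List.countP_drop_eq_card_filter]
  simp only [decide_eq_true_eq]
  unfold northStep at hia ⊢
  omega

theorem sub_mem_hookset_of_mem_pathSet (hl : l.Pairwise (· ≥ ·)) {i j : ℕ} (hi : i ∈ pathSet l)
    (hj : j ∉ pathSet l) (hij : i < j) : j - i ∈ hookset l := by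
  obtain ⟨a, ha, rfl⟩ : ∃ a < l.length, j = northStep l a := by
    simpa [mem_pathSet_iff] using hj
  exact northStep_sub_mem_hookset hl hi ha hij

lemma add_mem_pathSet_of_notMem_hookset (hl : l.Pairwise (· ≥ ·)) {s i : ℕ}
    (hs : s ∉ hookset l) (hi : i ∈ pathSet l) : i + s ∈ pathSet l := by
  rcases Nat.eq_zero_or_pos s with rfl | hs_pos
  · exact hi
  by_contra h
  have := sub_mem_hookset_of_mem_pathSet hl hi h (Nat.lt_add_of_pos_right hs_pos)
  exact hs (by simpa using this)

end Profile

section Windows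

variable {P : Set ℕ} {s N : ℕ}

lemma ncard_prefix_le_ncard_window_of_add_mem (hs : 0 < s) (hsN : s ≤ N)
    (hP : ∀ i ∈ P, i + s ∈ P) :
    {i | i < s ∧ i ∈ P}.ncard ≤ {i | N - s ≤ i ∧ i < N ∧ i ∈ P}.ncard := by
  have hP_iter : ∀ m, ∀ i ∈ P, i + s * m ∈ P := by
    intro m
    induction m with
    | zero => simp
    | succ m ih => exact fun i hi => by simpa [mul_add, add_assoc] using hP _ (ih i hi)
  -- `i + s * ((N - 1 - i) / s)` is the unique element of `[N - s, N)` congruent to `i` mod `s`.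
  refine Set.ncard_le_ncard_of_injOn (fun i => i + s * ((N - 1 - i) / s)) ?_ ?_
    ((Set.finite_Iio N).subset fun i hi => hi.2.1)
  · rintro i ⟨his, hi⟩
    have := Nat.div_add_mod (N - 1 - i) s
    have := Nat.mod_lt (N - 1 - i) hs
    exact ⟨by omega, by omega, hP_iter _ i hi⟩
  · rintro i ⟨his, -⟩ j ⟨hjs, -⟩ h
    have := congrArg (· % s) h
    simpa [Nat.add_mul_mod_self_left, Nat.mod_eq_of_lt his, Nat.mod_eq_of_lt hjs] using this

lemma ncard_window_add_ncard_window_compl (hsN : s ≤ N) :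
    {i | N - s ≤ i ∧ i < N ∧ i ∈ P}.ncard + {i | N - s ≤ i ∧ i < N ∧ i ∉ P}.ncard = s := by
  have h := Set.ncard_inter_add_ncard_sdiff_eq_ncard (Set.Ico (N - s) N) P
  rw [Set.ncard_Ico_nat, Nat.sub_sub_self hsN] at h
  convert h using 3 <;> simp [Set.Ico, Set.inter_def, Set.sdiff_eq, and_assoc]

end Windows

theorem stmt16_general (l : List ℕ) (hl : IsPartitionList l) (k : ℕ)
    (s : ℕ) (hs : 0 < s) (hs' : s < 2 * k)
    (hstart : s < 2 * {i : ℕ | i < s ∧ i ∈ pathSet l}.ncard)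
    (hend : s < 2 * {i : ℕ | 2 * k - s ≤ i ∧ i < 2 * k ∧ i ∉ pathSet l}.ncard) :
    s ∈ hookset l := by
  by_contra hs_hook
  have hshift := ncard_prefix_le_ncard_window_of_add_mem hs hs'.le
    fun i => add_mem_pathSet_of_notMem_hookset hl.1 hs_hook (i := i)
  have hsplit := ncard_window_add_ncard_window_compl (P := pathSet l) hs'.le
  omega

theorem stmt16 (l : List ℕ) (hl : IsPartitionList l) (k : ℕ)
    (hk : l.length = k) (hsquare : l.getD 0 0 = k)
    (s : ℕ) (hs : 0 < s) (hs' : s < 2 * k)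
    (hstart : s < 2 * {i : ℕ | i < s ∧ i ∈ pathSet l}.ncard)
    (hend : s < 2 * {i : ℕ | 2 * k - s ≤ i ∧ i < 2 * k ∧ i ∉ pathSet l}.ncard) :
    s ∈ hookset l :=
  stmt16_general l hl k s hs hs' hstart hend
end
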